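/- arXiv:gr-qc/0202013 — 2 statements merged into one kernel-verified Lean document; each statement's English description precedes it below -/
import Mathlib

section
/- In a Cauchy adapted frame, the 00-component of the Einstein tensor satisfies 2N^{−2}S_{00} = R̄ − K_{ij}K^{ij} + (K^h_h)², where R̄ = g^{ij}R̄_{ij} is the scalar curvature of the spatial metric (Hamiltonian constraint identity). -/
open scoped BigOperators

noncomputable section

variable {n : ℕ}

/-- Spacetime point: time `t` together with space coordinates. -/
abbrev SpTm (n : ℕ) := ℝ × (Fin n → ℝ)

/-- Coordinate partial derivative: `none` is `∂/∂t`, `some i` is `∂/∂x^i`. -/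
def cD (α : Option (Fin n)) (f : SpTm n → ℝ) (x : SpTm n) : ℝ :=
  match α with
  | none => fderiv ℝ f x (1, 0)
  | some i => fderiv ℝ f x (0, Pi.single i 1)

/-- Pfaff derivatives of the Cauchy adapted frame: `∂_0 = ∂_t − β^j ∂_j`, `∂_i = ∂/∂x^i`. -/
def pf (B : Fin n → SpTm n → ℝ) (α : Option (Fin n)) (f : SpTm n → ℝ) (x : SpTm n) : ℝ :=
  match α with
  | none => cD none f x - ∑ j, B j x * cD (some j) f x
  | some i => cD (some i) f x

/-- Spacetime metric components in the Cauchy adapted frame: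
`g_{00} = −N²`, `g_{0i} = 0`, `g_{ij}` the spatial metric. -/
def Gmet (N : SpTm n → ℝ) (gm : Fin n → Fin n → SpTm n → ℝ)
    (α γ : Option (Fin n)) (x : SpTm n) : ℝ :=
  match α, γ with
  | none, none => -(N x)^2
  | none, some _ => 0
  | some _, none => 0
  | some i, some j => gm i j x

/-- Inverse spacetime metric components in the Cauchy adapted frame. -/
def Gmetinv (N : SpTm n → ℝ) (gminv : Fin n → Fin n → SpTm n → ℝ)
    (α γ : Option (Fin n)) (x : SpTm n) : ℝ :=
  match α, γ with
  | none, none => -(N x)⁻¹^2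
  | none, some _ => 0
  | some _, none => 0
  | some i, some j => gminv i j x

/-- Structure coefficients of the Cauchy adapted frame: `C^i_{0j} = −C^i_{j0} = ∂_j β^i`. -/
def sC (B : Fin n → SpTm n → ℝ) (γ α δ : Option (Fin n)) (x : SpTm n) : ℝ :=
  match γ, α, δ with
  | some i, none, some j => cD (some j) (B i) x
  | some i, some j, none => -(cD (some j) (B i) x)
  | _, _, _ => 0

/-- Christoffel symbols `Γ^β_{αγ}` of the frame metric, computed with Pfaff derivatives. -/
def Chr (N : SpTm n → ℝ) (B : Fin n → SpTm n → ℝ)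
    (gm gminv : Fin n → Fin n → SpTm n → ℝ)
    (β α γ : Option (Fin n)) (x : SpTm n) : ℝ :=
  (1/2) * ∑ μ, Gmetinv N gminv β μ x *
    (pf B α (Gmet N gm γ μ) x + pf B γ (Gmet N gm α μ) x - pf B μ (Gmet N gm α γ) x)

/-- Frame correction term `ω̃_{αγ,μ}`. -/
def tildeOm (N : SpTm n → ℝ) (B : Fin n → SpTm n → ℝ)
    (gm : Fin n → Fin n → SpTm n → ℝ)
    (α γ μ : Option (Fin n)) (x : SpTm n) : ℝ :=
  (1/2) * ((∑ lam, Gmet N gm μ lam x * sC B lam α γ x)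
    - (∑ lam, Gmet N gm lam γ x * sC B lam α μ x)
    - (∑ lam, Gmet N gm α lam x * sC B lam γ μ x))

/-- Connection coefficients `ω^β_{αγ} = Γ^β_{αγ} + g^{βμ} ω̃_{αγ,μ}` of the Levi-Civita
connection in the Cauchy adapted frame. -/
def conn (N : SpTm n → ℝ) (B : Fin n → SpTm n → ℝ)
    (gm gminv : Fin n → Fin n → SpTm n → ℝ)
    (β α γ : Option (Fin n)) (x : SpTm n) : ℝ :=
  Chr N B gm gminv β α γ x
    + ∑ μ, Gmetinv N gminv β μ x * tildeOm N B gm α γ μ x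

/-- `∂̂_0 g_{ij} = ∂_t g_{ij} − (L_β g)_{ij}`, the Lie-corrected time derivative. -/
def hat0g (B : Fin n → SpTm n → ℝ) (gm : Fin n → Fin n → SpTm n → ℝ)
    (i j : Fin n) (x : SpTm n) : ℝ :=
  pf B none (gm i j) x
    - ∑ h, (gm h j x * cD (some i) (B h) x + gm i h x * cD (some j) (B h) x)

/-- Past-oriented unit normal in the Cauchy adapted frame: `ν_0 = N`, `ν_i = 0`. -/
def nuC (N : SpTm n → ℝ) (α : Option (Fin n)) : SpTm n → ℝ :=
  match α with
  | none => N
  | some _ => fun _ => 0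

/-- Covariant derivatives `∇_i ν_j` of the unit normal. -/
def covNu (N : SpTm n → ℝ) (B : Fin n → SpTm n → ℝ)
    (gm gminv : Fin n → Fin n → SpTm n → ℝ) (i j : Fin n) (x : SpTm n) : ℝ :=
  pf B (some i) (nuC N (some j)) x
    - ∑ lam, conn N B gm gminv lam (some i) (some j) x * nuC N lam x

/-- Extrinsic curvature `K_{ij} = (1/2)(∇_i ν_j + ∇_j ν_i)`. -/
def extK (N : SpTm n → ℝ) (B : Fin n → SpTm n → ℝ)
    (gm gminv : Fin n → Fin n → SpTm n → ℝ) (i j : Fin n) (x : SpTm n) : ℝ :=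
  (1/2) * (covNu N B gm gminv i j x + covNu N B gm gminv j i x)


/-- Extrinsic curvature defined by `∂̂_0 g_{ij} = −2N K_{ij}`. -/
def Kdef (N : SpTm n → ℝ) (B : Fin n → SpTm n → ℝ)
    (gm : Fin n → Fin n → SpTm n → ℝ) (i j : Fin n) (x : SpTm n) : ℝ :=
  -(1/(2 * N x)) * hat0g B gm i j x

/-- Mixed components `R_{λμ,}{}^α{}_β` of the spacetime Riemann tensor in the frame. -/
def RiemMix (N : SpTm n → ℝ) (B : Fin n → SpTm n → ℝ)
    (gm gminv : Fin n → Fin n → SpTm n → ℝ)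
    (lam mu α β : Option (Fin n)) (x : SpTm n) : ℝ :=
  pf B lam (conn N B gm gminv α mu β) x - pf B mu (conn N B gm gminv α lam β) x
    + (∑ ρ, (conn N B gm gminv α lam ρ x * conn N B gm gminv ρ mu β x
        - conn N B gm gminv α mu ρ x * conn N B gm gminv ρ lam β x))
    - ∑ ρ, conn N B gm gminv α ρ β x * sC B ρ lam mu x

/-- Covariant components `R_{λμ,αβ}` of the spacetime Riemann tensor. -/
def Riem (N : SpTm n → ℝ) (B : Fin n → SpTm n → ℝ)
    (gm gminv : Fin n → Fin n → SpTm n → ℝ)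
    (lam mu α β : Option (Fin n)) (x : SpTm n) : ℝ :=
  ∑ ν, Gmet N gm α ν x * RiemMix N B gm gminv lam mu ν β x

/-- Christoffel symbols `Γ̄^i_{jk}` of the induced spatial metric. -/
def sChr (gm gminv : Fin n → Fin n → SpTm n → ℝ) (i j k : Fin n) (x : SpTm n) : ℝ :=
  (1/2) * ∑ m, gminv i m x *
    (cD (some j) (gm k m) x + cD (some k) (gm j m) x - cD (some m) (gm j k) x)

/-- Mixed components `R̄_{jk,}{}^i{}_l` of the Riemann tensor of the spatial metric. -/
def sRiemMix (gm gminv : Fin n → Fin n → SpTm n → ℝ) (j k i l : Fin n) (x : SpTm n) : ℝ :=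
  cD (some j) (sChr gm gminv i k l) x - cD (some k) (sChr gm gminv i j l) x
    + ∑ m, (sChr gm gminv i j m x * sChr gm gminv m k l x
        - sChr gm gminv i k m x * sChr gm gminv m j l x)

/-- Covariant components `R̄_{jk,il}` of the Riemann tensor of the spatial metric. -/
def sRiem (gm gminv : Fin n → Fin n → SpTm n → ℝ) (j k i l : Fin n) (x : SpTm n) : ℝ :=
  ∑ m, gm i m x * sRiemMix gm gminv j k m l x

/-- Ricci tensor `R_{αβ} = g^{λν} R_{λα,νβ}` of the spacetime metric in the frame. -/
def RicG (N : SpTm n → ℝ) (B : Fin n → SpTm n → ℝ)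
    (gm gminv : Fin n → Fin n → SpTm n → ℝ) (α β : Option (Fin n)) (x : SpTm n) : ℝ :=
  ∑ lam, ∑ ν, Gmetinv N gminv lam ν x * Riem N B gm gminv lam α ν β x

/-- Scalar curvature of the spacetime metric. -/
def ScalG (N : SpTm n → ℝ) (B : Fin n → SpTm n → ℝ)
    (gm gminv : Fin n → Fin n → SpTm n → ℝ) (x : SpTm n) : ℝ :=
  ∑ α, ∑ β, Gmetinv N gminv α β x * RicG N B gm gminv α β x

/-- `00`-component of the Einstein tensor `S_{αβ} = R_{αβ} − (1/2) g_{αβ} R`. -/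
def S00 (N : SpTm n → ℝ) (B : Fin n → SpTm n → ℝ)
    (gm gminv : Fin n → Fin n → SpTm n → ℝ) (x : SpTm n) : ℝ :=
  RicG N B gm gminv none none x - (1/2) * Gmet N gm none none x * ScalG N B gm gminv x

/-- Ricci tensor `R̄_{ij} = ḡ^{kl} R̄_{ki,lj}` of the induced spatial metric. -/
def sRic (gm gminv : Fin n → Fin n → SpTm n → ℝ) (i j : Fin n) (x : SpTm n) : ℝ :=
  ∑ k, ∑ l, gminv k l x * sRiem gm gminv k i l j x

/-- Scalar curvature `R̄` of the induced spatial metric. -/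
def sScal (gm gminv : Fin n → Fin n → SpTm n → ℝ) (x : SpTm n) : ℝ :=
  ∑ i, ∑ j, gminv i j x * sRic gm gminv i j x

/-! ### Auxiliary development for the Hamiltonian constraint -/

section Aux

/-- Direction vector of the coordinate derivative. -/
def vec (n : ℕ) (α : Option (Fin n)) : SpTm n :=
  match α with | none => (1, 0) | some i => (0, Pi.single i 1)

lemma cD_eq (α : Option (Fin n)) (f : SpTm n → ℝ) (x : SpTm n) :
    cD α f x = fderiv ℝ f x (vec n α) := by cases α <;> rfl

lemma cD_const (α : Option (Fin n)) (c : ℝ) (x : SpTm n) : cD α (fun _ => c) x = 0 := by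
  rw [cD_eq, fderiv_fun_const]; simp

lemma cD_add {f g : SpTm n → ℝ} (α : Option (Fin n)) (x : SpTm n)
    (hf : DifferentiableAt ℝ f x) (hg : DifferentiableAt ℝ g x) :
    cD α (fun y => f y + g y) x = cD α f x + cD α g x := by
  simp only [cD_eq]; rw [fderiv_fun_add hf hg]; rfl

lemma cD_mul {f g : SpTm n → ℝ} (α : Option (Fin n)) (x : SpTm n)
    (hf : DifferentiableAt ℝ f x) (hg : DifferentiableAt ℝ g x) :
    cD α (fun y => f y * g y) x = cD α f x * g x + f x * cD α g x := by
  simp only [cD_eq]; rw [fderiv_fun_mul hf hg]; simp [mul_comm]; ring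

lemma cD_sub {f g : SpTm n → ℝ} (α : Option (Fin n)) (x : SpTm n)
    (hf : DifferentiableAt ℝ f x) (hg : DifferentiableAt ℝ g x) :
    cD α (fun y => f y - g y) x = cD α f x - cD α g x := by
  simp only [cD_eq]; rw [fderiv_fun_sub hf hg]; rfl

lemma cD_sum {ι : Type*} (s : Finset ι) {f : ι → SpTm n → ℝ} (α : Option (Fin n)) (x : SpTm n)
    (hf : ∀ i ∈ s, DifferentiableAt ℝ (f i) x) :
    cD α (fun y => ∑ i ∈ s, f i y) x = ∑ i ∈ s, cD α (f i) x := by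
  simp only [cD_eq]; rw [fderiv_fun_sum hf]; simp

lemma cD_contDiff {f : SpTm n → ℝ} (hf : ContDiff ℝ (⊤ : ℕ∞) f) (α : Option (Fin n)) :
    ContDiff ℝ (⊤ : ℕ∞) (cD α f) := by
  have h1 : ContDiff ℝ (⊤ : ℕ∞) (fderiv ℝ f) := hf.fderiv_right (by simp)
  have : ContDiff ℝ (⊤ : ℕ∞) (fun x => fderiv ℝ f x (vec n α)) := h1.clm_apply contDiff_const
  convert this using 2 with x
  exact cD_eq α f x

lemma cD_fderiv_apply {f : SpTm n → ℝ} (hf : ContDiff ℝ (⊤ : ℕ∞) f) (α : Option (Fin n))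
    (x : SpTm n) (w : SpTm n) :
    fderiv ℝ (cD α f) x w = fderiv ℝ (fderiv ℝ f) x w (vec n α) := by
  have hd : DifferentiableAt ℝ (fderiv ℝ f) x := (hf.fderiv_right (m := (⊤ : ℕ∞)) (by simp)).differentiable (by simp) x
  have h3 : fderiv ℝ (fun y => fderiv ℝ f y (vec n α)) x
      = (fderiv ℝ f x).comp (fderiv ℝ (fun _ => vec n α) x)
        + (fderiv ℝ (fderiv ℝ f) x).flip (vec n α) := fderiv_clm_apply hd (differentiableAt_const _)
  have h2 : cD α f = fun y => fderiv ℝ f y (vec n α) := by funext y; exact cD_eq α f y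
  rw [h2, h3]; simp

lemma cD_comm {f : SpTm n → ℝ} (hf : ContDiff ℝ (⊤ : ℕ∞) f) (α γ : Option (Fin n)) (x : SpTm n) :
    cD α (cD γ f) x = cD γ (cD α f) x := by
  have hsymm : IsSymmSndFDerivAt ℝ f x := hf.contDiffAt.isSymmSndFDerivAt (by simp only [minSmoothness_of_isRCLikeNormedField]; exact WithTop.coe_le_coe.mpr (le_top : (2 : ℕ∞) ≤ ⊤))
  rw [cD_eq, cD_eq, cD_fderiv_apply hf, cD_fderiv_apply hf, hsymm.eq]

/-! #### Pfaff derivative rules -/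

lemma pf_congr {f g : SpTm n → ℝ} (B : Fin n → SpTm n → ℝ) (α : Option (Fin n)) (x : SpTm n)
    (h : ∀ y, f y = g y) : pf B α f x = pf B α g x := by
  have : f = g := funext h
  rw [this]

lemma pf_const (B : Fin n → SpTm n → ℝ) (α : Option (Fin n)) (c : ℝ) (x : SpTm n) :
    pf B α (fun _ => c) x = 0 := by
  cases α <;> simp [pf, cD_const]

lemma pf_add {f g : SpTm n → ℝ} (B : Fin n → SpTm n → ℝ) (α : Option (Fin n)) (x : SpTm n)
    (hf : DifferentiableAt ℝ f x) (hg : DifferentiableAt ℝ g x) :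
    pf B α (fun y => f y + g y) x = pf B α f x + pf B α g x := by
  cases α <;> simp only [pf, cD_add _ x hf hg, mul_add, Finset.sum_add_distrib]
  · ring

lemma pf_mul {f g : SpTm n → ℝ} (B : Fin n → SpTm n → ℝ) (α : Option (Fin n)) (x : SpTm n)
    (hf : DifferentiableAt ℝ f x) (hg : DifferentiableAt ℝ g x) :
    pf B α (fun y => f y * g y) x = pf B α f x * g x + f x * pf B α g x := by
  cases α <;> simp only [pf, cD_mul _ x hf hg]
  · have h1 : ∑ j, B j x * (cD (some j) f x * g x + f x * cD (some j) g x)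
        = (∑ j, B j x * cD (some j) f x) * g x + f x * ∑ j, B j x * cD (some j) g x := by
      rw [Finset.sum_mul, Finset.mul_sum, ← Finset.sum_add_distrib]
      exact Finset.sum_congr rfl fun j _ => by ring
    rw [h1]; ring

lemma pf_sum {ι : Type*} (s : Finset ι) {f : ι → SpTm n → ℝ} (B : Fin n → SpTm n → ℝ)
    (α : Option (Fin n)) (x : SpTm n) (hf : ∀ i ∈ s, DifferentiableAt ℝ (f i) x) :
    pf B α (fun y => ∑ i ∈ s, f i y) x = ∑ i ∈ s, pf B α (f i) x := by
  cases α <;> simp only [pf, cD_sum s _ x hf]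
  · rw [Finset.sum_sub_distrib]
    congr 1
    simp only [Finset.mul_sum]
    exact Finset.sum_comm

lemma pf_contDiff {f : SpTm n → ℝ} {B : Fin n → SpTm n → ℝ}
    (hf : ContDiff ℝ (⊤ : ℕ∞) f) (hB : ∀ i, ContDiff ℝ (⊤ : ℕ∞) (B i)) (α : Option (Fin n)) :
    ContDiff ℝ (⊤ : ℕ∞) (pf B α f) := by
  cases α with
  | none =>
      have : ContDiff ℝ (⊤ : ℕ∞) (fun x => cD (n := n) none f x - ∑ j, B j x * cD (some j) f x) := by
        exact (cD_contDiff hf none).sub (ContDiff.sum fun j _ => (hB j).mul (cD_contDiff hf _))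
      exact this
  | some i =>
      have : pf B (some i) f = cD (some i) f := rfl
      rw [this]; exact cD_contDiff hf _

/-! #### Component simp lemmas -/

section Comp
variable {N : SpTm n → ℝ} {B : Fin n → SpTm n → ℝ} {gm gminv : Fin n → Fin n → SpTm n → ℝ}

@[simp] lemma sC_none' (α γ : Option (Fin n)) (x : SpTm n) : sC B none α γ x = 0 := by
  cases α <;> cases γ <;> rfl
@[simp] lemma sC_s00 (k : Fin n) (x : SpTm n) : sC B (some k) none none x = 0 := rfl
@[simp] lemma sC_s0j (k j : Fin n) (x : SpTm n) :
    sC B (some k) none (some j) x = cD (some j) (B k) x := rfl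
@[simp] lemma sC_sj0 (k j : Fin n) (x : SpTm n) :
    sC B (some k) (some j) none x = -cD (some j) (B k) x := rfl
@[simp] lemma sC_sjj (k i j : Fin n) (x : SpTm n) : sC B (some k) (some i) (some j) x = 0 := rfl

@[simp] lemma Gmet_00 (x : SpTm n) : Gmet N gm none none x = -(N x)^2 := rfl
@[simp] lemma Gmet_0s (i : Fin n) (x : SpTm n) : Gmet N gm none (some i) x = 0 := rfl
@[simp] lemma Gmet_s0 (i : Fin n) (x : SpTm n) : Gmet N gm (some i) none x = 0 := rfl
@[simp] lemma Gmet_ss (i j : Fin n) (x : SpTm n) : Gmet N gm (some i) (some j) x = gm i j x := rfl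

@[simp] lemma Gmetinv_00 (x : SpTm n) : Gmetinv N gminv none none x = -(N x)⁻¹^2 := rfl
@[simp] lemma Gmetinv_0s (i : Fin n) (x : SpTm n) : Gmetinv N gminv none (some i) x = 0 := rfl
@[simp] lemma Gmetinv_s0 (i : Fin n) (x : SpTm n) : Gmetinv N gminv (some i) none x = 0 := rfl
@[simp] lemma Gmetinv_ss (i j : Fin n) (x : SpTm n) :
    Gmetinv N gminv (some i) (some j) x = gminv i j x := rfl

lemma pf_some (f : SpTm n → ℝ) (i : Fin n) (x : SpTm n) : pf B (some i) f x = cD (some i) f x := rfl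

/-! #### Commutator of Pfaff derivatives -/

lemma pf_comm {f : SpTm n → ℝ}
    (hf : ContDiff ℝ (⊤ : ℕ∞) f) (hB : ∀ i, ContDiff ℝ (⊤ : ℕ∞) (B i)) (α γ : Option (Fin n)) (x : SpTm n) :
    pf B α (pf B γ f) x - pf B γ (pf B α f) x = ∑ ρ, sC B ρ α γ x * pf B ρ f x := by
  have hdf : ∀ δ : Option (Fin n), DifferentiableAt ℝ (cD δ f) x := fun δ =>
    (cD_contDiff hf δ).differentiable (by simp) x
  have hprod : ∀ k : Fin n, DifferentiableAt ℝ (fun y => B k y * cD (some k) f y) x :=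
    fun k => ((hB k).differentiable (by simp) x).mul (hdf _)
  have key : ∀ j : Fin n,
      pf B none (pf B (some j) f) x - pf B (some j) (pf B none f) x
        = ∑ k, cD (some j) (B k) x * cD (some k) f x := by
    intro j
    have e1 : pf B (some j) (pf B none f) x
        = cD (some j) (cD none f) x
          - ∑ k, (cD (some j) (B k) x * cD (some k) f x
              + B k x * cD (some j) (cD (some k) f) x) := by
      have h0 : pf B (some j) (pf B none f) x
          = cD (some j) (fun y => cD none f y - ∑ k, B k y * cD (some k) f y) x := rfl
      rw [h0, cD_sub _ x (hdf none) (DifferentiableAt.fun_sum fun k _ => hprod k),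
        cD_sum _ _ x fun k _ => hprod k]
      congr 1
      exact Finset.sum_congr rfl fun k _ =>
        cD_mul _ x ((hB k).differentiable (by simp) x) (hdf _)
    have e2 : pf B none (pf B (some j) f) x
        = cD none (cD (some j) f) x - ∑ k, B k x * cD (some k) (cD (some j) f) x := rfl
    rw [e1, e2, Finset.sum_add_distrib]
    have c1 : cD none (cD (some j) f) x = cD (some j) (cD none f) x := cD_comm hf _ _ x
    have c2 : ∀ k : Fin n, cD (some k) (cD (some j) f) x = cD (some j) (cD (some k) f) x :=
      fun k => cD_comm hf _ _ x
    simp only [c1, c2]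
    ring
  cases α with
  | none =>
    cases γ with
    | none => simp
    | some j =>
      rw [key j, Fintype.sum_option]
      simp [pf_some]
  | some i =>
    cases γ with
    | none =>
      have hk := key i
      rw [show pf B (some i) (pf B none f) x - pf B none (pf B (some i) f) x
          = -(pf B none (pf B (some i) f) x - pf B (some i) (pf B none f) x) by ring, hk,
        Fintype.sum_option]
      simp [pf_some, Finset.sum_neg_distrib]
    | some j =>
      have c : pf B (some i) (pf B (some j) f) x = pf B (some j) (pf B (some i) f) x := by
        show cD (some i) (cD (some j) f) x = cD (some j) (cD (some i) f) x
        exact cD_comm hf _ _ x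
      rw [c, Fintype.sum_option]
      simp

/-! #### Smoothness of the geometric objects -/

lemma Gmet_contDiff (hN : ContDiff ℝ (⊤ : ℕ∞) N) (hgm : ∀ i j, ContDiff ℝ (⊤ : ℕ∞) (gm i j))
    (α γ : Option (Fin n)) : ContDiff ℝ (⊤ : ℕ∞) (Gmet N gm α γ) := by
  cases α <;> cases γ
  · exact (hN.pow 2).neg
  · exact contDiff_const
  · exact contDiff_const
  · exact hgm _ _

lemma Gmetinv_contDiff (hN : ContDiff ℝ (⊤ : ℕ∞) N) (hNpos : ∀ x, 0 < N x)
    (hgminv : ∀ i j, ContDiff ℝ (⊤ : ℕ∞) (gminv i j)) (α γ : Option (Fin n)) :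
    ContDiff ℝ (⊤ : ℕ∞) (Gmetinv N gminv α γ) := by
  cases α <;> cases γ
  · exact ((hN.inv fun x => (hNpos x).ne').pow 2).neg
  · exact contDiff_const
  · exact contDiff_const
  · exact hgminv _ _

lemma sC_contDiff (hB : ∀ i, ContDiff ℝ (⊤ : ℕ∞) (B i)) (ρ α γ : Option (Fin n)) :
    ContDiff ℝ (⊤ : ℕ∞) (sC B ρ α γ) := by
  cases ρ with
  | none =>
    have : sC B none α γ = fun _ => (0:ℝ) := funext fun x => sC_none' α γ x
    rw [this]; exact contDiff_const
  | some k =>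
    cases α with
    | none =>
      cases γ with
      | none => exact contDiff_const
      | some j => exact cD_contDiff (hB k) (some j)
    | some j =>
      cases γ with
      | none => exact (cD_contDiff (hB k) (some j)).neg
      | some j' => exact contDiff_const

lemma Chr_contDiff (hN : ContDiff ℝ (⊤ : ℕ∞) N) (hNpos : ∀ x, 0 < N x)
    (hB : ∀ i, ContDiff ℝ (⊤ : ℕ∞) (B i)) (hgm : ∀ i j, ContDiff ℝ (⊤ : ℕ∞) (gm i j))
    (hgminv : ∀ i j, ContDiff ℝ (⊤ : ℕ∞) (gminv i j)) (β α γ : Option (Fin n)) :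
    ContDiff ℝ (⊤ : ℕ∞) (Chr N B gm gminv β α γ) := by
  apply ContDiff.mul contDiff_const
  apply ContDiff.sum
  intro μ _
  exact (Gmetinv_contDiff hN hNpos hgminv _ _).mul
    (((pf_contDiff (Gmet_contDiff hN hgm _ _) hB _).add
      (pf_contDiff (Gmet_contDiff hN hgm _ _) hB _)).sub
      (pf_contDiff (Gmet_contDiff hN hgm _ _) hB _))

lemma tildeOm_contDiff (hN : ContDiff ℝ (⊤ : ℕ∞) N) (hB : ∀ i, ContDiff ℝ (⊤ : ℕ∞) (B i))
    (hgm : ∀ i j, ContDiff ℝ (⊤ : ℕ∞) (gm i j)) (α γ μ : Option (Fin n)) :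
    ContDiff ℝ (⊤ : ℕ∞) (tildeOm N B gm α γ μ) := by
  apply ContDiff.mul contDiff_const
  exact ((ContDiff.sum fun lam _ => (Gmet_contDiff hN hgm _ _).mul (sC_contDiff hB _ _ _)).sub
    (ContDiff.sum fun lam _ => (Gmet_contDiff hN hgm _ _).mul (sC_contDiff hB _ _ _))).sub
    (ContDiff.sum fun lam _ => (Gmet_contDiff hN hgm _ _).mul (sC_contDiff hB _ _ _))

lemma conn_contDiff (hN : ContDiff ℝ (⊤ : ℕ∞) N) (hNpos : ∀ x, 0 < N x)
    (hB : ∀ i, ContDiff ℝ (⊤ : ℕ∞) (B i)) (hgm : ∀ i j, ContDiff ℝ (⊤ : ℕ∞) (gm i j))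
    (hgminv : ∀ i j, ContDiff ℝ (⊤ : ℕ∞) (gminv i j)) (β α γ : Option (Fin n)) :
    ContDiff ℝ (⊤ : ℕ∞) (conn N B gm gminv β α γ) := by
  exact (Chr_contDiff hN hNpos hB hgm hgminv _ _ _).add
    (ContDiff.sum fun μ _ => (Gmetinv_contDiff hN hNpos hgminv _ _).mul
      (tildeOm_contDiff hN hB hgm _ _ _))

/-! #### Metric algebra -/

lemma sC_antisymm (ρ α γ : Option (Fin n)) (x : SpTm n) :
    sC B ρ γ α x = -sC B ρ α γ x := by
  cases ρ <;> cases α <;> cases γ <;> simp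

lemma Gmet_symm (hgsym : ∀ i j x, gm i j x = gm j i x) (N : SpTm n → ℝ)
    (α γ : Option (Fin n)) (x : SpTm n) : Gmet N gm α γ x = Gmet N gm γ α x := by
  cases α <;> cases γ <;> simp [hgsym]

lemma gminv_symm (hgsym : ∀ i j x, gm i j x = gm j i x)
    (hginv : ∀ i j x, (∑ k, gm i k x * gminv k j x) = if i = j then (1:ℝ) else 0)
    (i j : Fin n) (x : SpTm n) : gminv i j x = gminv j i x := by
  have hAB : (Matrix.of fun a b => gm a b x) * (Matrix.of fun a b => gminv a b x) = 1 := by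
    ext a b
    rw [Matrix.mul_apply, Matrix.one_apply]
    exact hginv a b x
  have hBinv : (Matrix.of fun a b => gm a b x)⁻¹ = Matrix.of fun a b => gminv a b x :=
    Matrix.inv_eq_right_inv hAB
  have hAsym : Matrix.transpose (Matrix.of fun a b => gm a b x) = Matrix.of fun a b => gm a b x := by
    ext a b
    exact hgsym b a x
  have hsym : Matrix.transpose (Matrix.of fun a b => gminv a b x)
      = Matrix.of fun a b => gminv a b x := by
    rw [← hBinv, Matrix.transpose_nonsing_inv, hAsym]
  exact (congrFun (congrFun hsym i) j).symm

lemma Gmet_mul_Gmetinv (hNpos : ∀ x, 0 < N x)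
    (hginv : ∀ i j x, (∑ k, gm i k x * gminv k j x) = if i = j then (1:ℝ) else 0)
    (α γ : Option (Fin n)) (x : SpTm n) :
    (∑ ν, Gmet N gm α ν x * Gmetinv N gminv ν γ x) = if α = γ then (1:ℝ) else 0 := by
  rw [Fintype.sum_option]
  have hne := (hNpos x).ne'
  cases α <;> cases γ <;> simp
  · field_simp
  · exact hginv _ _ x

end Comp

/-! #### Lowered connection, metric compatibility, antisymmetry of the curvature -/

section Lowered
variable {N : SpTm n → ℝ} {B : Fin n → SpTm n → ℝ} {gm gminv : Fin n → Fin n → SpTm n → ℝ}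

/-- Lowered connection coefficients `ω_{αγ,β} = g_{βν} ω^ν_{αγ}`. -/
def lconn (N : SpTm n → ℝ) (B : Fin n → SpTm n → ℝ) (gm gminv : Fin n → Fin n → SpTm n → ℝ)
    (α γ β : Option (Fin n)) (x : SpTm n) : ℝ :=
  ∑ ν, Gmet N gm β ν x * conn N B gm gminv ν α γ x

lemma lconn_contDiff (hN : ContDiff ℝ (⊤ : ℕ∞) N) (hNpos : ∀ x, 0 < N x)
    (hB : ∀ i, ContDiff ℝ (⊤ : ℕ∞) (B i)) (hgm : ∀ i j, ContDiff ℝ (⊤ : ℕ∞) (gm i j))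
    (hgminv : ∀ i j, ContDiff ℝ (⊤ : ℕ∞) (gminv i j)) (α γ β : Option (Fin n)) :
    ContDiff ℝ (⊤ : ℕ∞) (lconn N B gm gminv α γ β) :=
  ContDiff.sum fun ν _ => (Gmet_contDiff hN hgm _ _).mul
    (conn_contDiff hN hNpos hB hgm hgminv _ _ _)

lemma metinv_contract (hNpos : ∀ x, 0 < N x)
    (hginv : ∀ i j x, (∑ k, gm i k x * gminv k j x) = if i = j then (1:ℝ) else 0)
    (β : Option (Fin n)) (x : SpTm n) (F : Option (Fin n) → ℝ) :
    (∑ ν, Gmet N gm β ν x * ∑ μ, Gmetinv N gminv ν μ x * F μ) = F β := by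
  calc (∑ ν, Gmet N gm β ν x * ∑ μ, Gmetinv N gminv ν μ x * F μ)
      = ∑ ν, ∑ μ, Gmet N gm β ν x * Gmetinv N gminv ν μ x * F μ := by
        refine Finset.sum_congr rfl fun ν _ => ?_
        rw [Finset.mul_sum]
        exact Finset.sum_congr rfl fun μ _ => by ring
    _ = ∑ μ, ∑ ν, Gmet N gm β ν x * Gmetinv N gminv ν μ x * F μ := Finset.sum_comm
    _ = ∑ μ, (∑ ν, Gmet N gm β ν x * Gmetinv N gminv ν μ x) * F μ := by
        exact Finset.sum_congr rfl fun μ _ => (Finset.sum_mul _ _ _).symm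
    _ = ∑ μ, (if β = μ then (1:ℝ) else 0) * F μ := by
        exact Finset.sum_congr rfl fun μ _ => by rw [Gmet_mul_Gmetinv hNpos hginv]
    _ = F β := by simp

lemma lconn_eq (hNpos : ∀ x, 0 < N x)
    (hginv : ∀ i j x, (∑ k, gm i k x * gminv k j x) = if i = j then (1:ℝ) else 0)
    (α γ β : Option (Fin n)) (x : SpTm n) :
    lconn N B gm gminv α γ β x
      = (1/2) * (pf B α (Gmet N gm γ β) x + pf B γ (Gmet N gm α β) x
          - pf B β (Gmet N gm α γ) x) + tildeOm N B gm α γ β x := by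
  have h1 : lconn N B gm gminv α γ β x
      = (∑ ν, Gmet N gm β ν x * ∑ μ, Gmetinv N gminv ν μ x *
          ((1/2) * (pf B α (Gmet N gm γ μ) x + pf B γ (Gmet N gm α μ) x
            - pf B μ (Gmet N gm α γ) x)))
        + (∑ ν, Gmet N gm β ν x * ∑ μ, Gmetinv N gminv ν μ x * tildeOm N B gm α γ μ x) := by
    simp only [lconn, conn, mul_add, Finset.sum_add_distrib]
    congr 1
    refine Finset.sum_congr rfl fun ν _ => ?_
    congr 1
    rw [Chr, Finset.mul_sum]
    exact Finset.sum_congr rfl fun μ _ => by ring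
  rw [h1, metinv_contract hNpos hginv, metinv_contract hNpos hginv]

lemma tildeOm_symm_zero (N : SpTm n → ℝ) (hgsym : ∀ i j x, gm i j x = gm j i x)
    (α β γ : Option (Fin n)) (x : SpTm n) :
    tildeOm N B gm α β γ x + tildeOm N B gm α γ β x = 0 := by
  simp only [tildeOm]
  have e1 : (∑ lam, Gmet N gm γ lam x * sC B lam α β x)
      = ∑ lam, Gmet N gm lam γ x * sC B lam α β x :=
    Finset.sum_congr rfl fun lam _ => by rw [Gmet_symm hgsym]
  have e2 : (∑ lam, Gmet N gm β lam x * sC B lam α γ x)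
      = ∑ lam, Gmet N gm lam β x * sC B lam α γ x :=
    Finset.sum_congr rfl fun lam _ => by rw [Gmet_symm hgsym]
  have e3 : (∑ lam, Gmet N gm α lam x * sC B lam γ β x)
      = -∑ lam, Gmet N gm α lam x * sC B lam β γ x := by
    rw [← Finset.sum_neg_distrib]
    exact Finset.sum_congr rfl fun lam _ => by rw [sC_antisymm]; ring
  rw [e1, e2, e3]
  ring

lemma conn_compat (hgsym : ∀ i j x, gm i j x = gm j i x) (hNpos : ∀ x, 0 < N x)
    (hginv : ∀ i j x, (∑ k, gm i k x * gminv k j x) = if i = j then (1:ℝ) else 0)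
    (α β γ : Option (Fin n)) (x : SpTm n) :
    pf B α (Gmet N gm β γ) x
      = lconn N B gm gminv α β γ x + lconn N B gm gminv α γ β x := by
  rw [lconn_eq hNpos hginv, lconn_eq hNpos hginv]
  have hs1 : pf B α (Gmet N gm γ β) x = pf B α (Gmet N gm β γ) x :=
    pf_congr B α x fun y => Gmet_symm hgsym N γ β y
  have ht := tildeOm_symm_zero (B := B) N hgsym α β γ x
  linarith [ht, hs1]

/-- Antisymmetry of the covariant Riemann tensor in its last two indices. -/
lemma Riem_antisymm_last (hN : ContDiff ℝ (⊤ : ℕ∞) N) (hNpos : ∀ x, 0 < N x)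
    (hB : ∀ i, ContDiff ℝ (⊤ : ℕ∞) (B i)) (hgm : ∀ i j, ContDiff ℝ (⊤ : ℕ∞) (gm i j))
    (hgminv : ∀ i j, ContDiff ℝ (⊤ : ℕ∞) (gminv i j))
    (hgsym : ∀ i j x, gm i j x = gm j i x)
    (hginv : ∀ i j x, (∑ k, gm i k x * gminv k j x) = if i = j then (1:ℝ) else 0)
    (lam mu alpha beta : Option (Fin n)) (x : SpTm n) :
    Riem N B gm gminv lam mu alpha beta x + Riem N B gm gminv lam mu beta alpha x = 0 := by
  have dg : ∀ a b : Option (Fin n), DifferentiableAt ℝ (Gmet N gm a b) x := fun a b =>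
    (Gmet_contDiff hN hgm a b).differentiable (by simp) x
  have dc : ∀ ν a b : Option (Fin n), DifferentiableAt ℝ (conn N B gm gminv ν a b) x :=
    fun ν a b => (conn_contDiff hN hNpos hB hgm hgminv ν a b).differentiable (by simp) x
  have dl : ∀ a b c : Option (Fin n), DifferentiableAt ℝ (lconn N B gm gminv a b c) x :=
    fun a b c => (lconn_contDiff hN hNpos hB hgm hgminv a b c).differentiable (by simp) x
  have hcompat : ∀ (d a b : Option (Fin n)) (y : SpTm n),
      pf B d (Gmet N gm a b) y
        = lconn N B gm gminv d a b y + lconn N B gm gminv d b a y :=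
    fun d a b y => conn_compat hgsym hNpos hginv d a b y
  -- expansion of Riem into five sums
  have expand : ∀ a b : Option (Fin n), Riem N B gm gminv lam mu a b x
      = (∑ ν, Gmet N gm a ν x * pf B lam (conn N B gm gminv ν mu b) x)
        - (∑ ν, Gmet N gm a ν x * pf B mu (conn N B gm gminv ν lam b) x)
        + ((∑ ν, ∑ ρ, Gmet N gm a ν x *
              (conn N B gm gminv ν lam ρ x * conn N B gm gminv ρ mu b x))
          - (∑ ν, ∑ ρ, Gmet N gm a ν x *
              (conn N B gm gminv ν mu ρ x * conn N B gm gminv ρ lam b x)))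
        - (∑ ν, ∑ ρ, Gmet N gm a ν x *
            (conn N B gm gminv ν ρ b x * sC B ρ lam mu x)) := by
    intro a b
    rw [Riem]
    have inner : ∀ ν : Option (Fin n),
        Gmet N gm a ν x * RiemMix N B gm gminv lam mu ν b x
          = Gmet N gm a ν x * pf B lam (conn N B gm gminv ν mu b) x
            - Gmet N gm a ν x * pf B mu (conn N B gm gminv ν lam b) x
            + ((∑ ρ, Gmet N gm a ν x *
                  (conn N B gm gminv ν lam ρ x * conn N B gm gminv ρ mu b x))
              - (∑ ρ, Gmet N gm a ν x *
                  (conn N B gm gminv ν mu ρ x * conn N B gm gminv ρ lam b x)))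
            - (∑ ρ, Gmet N gm a ν x *
                (conn N B gm gminv ν ρ b x * sC B ρ lam mu x)) := by
      intro ν
      have hS : Gmet N gm a ν x * (∑ ρ, (conn N B gm gminv ν lam ρ x * conn N B gm gminv ρ mu b x
            - conn N B gm gminv ν mu ρ x * conn N B gm gminv ρ lam b x))
          = (∑ ρ, Gmet N gm a ν x *
              (conn N B gm gminv ν lam ρ x * conn N B gm gminv ρ mu b x))
            - (∑ ρ, Gmet N gm a ν x *
              (conn N B gm gminv ν mu ρ x * conn N B gm gminv ρ lam b x)) := by
        rw [Finset.mul_sum, ← Finset.sum_sub_distrib]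
        exact Finset.sum_congr rfl fun ρ _ => mul_sub _ _ _
      have hT : Gmet N gm a ν x * (∑ ρ, conn N B gm gminv ν ρ b x * sC B ρ lam mu x)
          = ∑ ρ, Gmet N gm a ν x * (conn N B gm gminv ν ρ b x * sC B ρ lam mu x) :=
        Finset.mul_sum _ _ _
      rw [RiemMix]
      linear_combination hS - hT
    rw [Finset.sum_congr rfl fun ν _ => inner ν]
    simp only [Finset.sum_add_distrib, Finset.sum_sub_distrib]
  -- splitting of the derivative terms
  have hsplit : ∀ (d a b c : Option (Fin n)),
      (∑ ν, Gmet N gm a ν x * pf B d (conn N B gm gminv ν b c) x)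
        = pf B d (lconn N B gm gminv b c a) x
          - ∑ ν, pf B d (Gmet N gm a ν) x * conn N B gm gminv ν b c x := by
    intro d a b c
    have h : pf B d (lconn N B gm gminv b c a) x
        = ∑ ν, (pf B d (Gmet N gm a ν) x * conn N B gm gminv ν b c x
            + Gmet N gm a ν x * pf B d (conn N B gm gminv ν b c) x) := by
      rw [show lconn N B gm gminv b c a
          = fun y => ∑ ν, Gmet N gm a ν y * conn N B gm gminv ν b c y from rfl,
        pf_sum _ (f := fun ν y => Gmet N gm a ν y * conn N B gm gminv ν b c y) _ _ _
          fun ν _ => (dg a ν).mul (dc ν b c)]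
      exact Finset.sum_congr rfl fun ν _ => pf_mul _ _ _ (dg a ν) (dc ν b c)
    rw [h, Finset.sum_add_distrib]
    ring
  -- pf of the sum of the two lowered connections
  have hpfsum : ∀ d e : Option (Fin n),
      pf B d (lconn N B gm gminv e beta alpha) x + pf B d (lconn N B gm gminv e alpha beta) x
        = pf B d (pf B e (Gmet N gm beta alpha)) x := by
    intro d e
    rw [← pf_add _ _ _ (dl e beta alpha) (dl e alpha beta)]
    exact (pf_congr B d x fun y => (hcompat e beta alpha y)).symm
  -- commutator
  have hcomm : pf B lam (pf B mu (Gmet N gm beta alpha)) x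
      - pf B mu (pf B lam (Gmet N gm beta alpha)) x
      = ∑ ρ, sC B ρ lam mu x * pf B ρ (Gmet N gm beta alpha) x :=
    pf_comm (Gmet_contDiff hN hgm beta alpha) hB lam mu x
  -- compat inside sums
  have hsum_compat : ∀ (d a b c : Option (Fin n)),
      (∑ ν, pf B d (Gmet N gm a ν) x * conn N B gm gminv ν b c x)
        = (∑ ν, lconn N B gm gminv d a ν x * conn N B gm gminv ν b c x)
          + ∑ ν, lconn N B gm gminv d ν a x * conn N B gm gminv ν b c x := by
    intro d a b c
    rw [← Finset.sum_add_distrib]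
    exact Finset.sum_congr rfl fun ν _ => by rw [hcompat d a ν x]; ring
  -- quadratic-term reshuffles
  have hquad : ∀ a b c d : Option (Fin n),
      (∑ ν, ∑ ρ, Gmet N gm a ν x * (conn N B gm gminv ν c ρ x * conn N B gm gminv ρ d b x))
        = ∑ ν, lconn N B gm gminv c ν a x * conn N B gm gminv ν d b x := by
    intro a b c d
    rw [Finset.sum_comm]
    refine Finset.sum_congr rfl fun ρ _ => ?_
    rw [show lconn N B gm gminv c ρ a x
        = ∑ ν, Gmet N gm a ν x * conn N B gm gminv ν c ρ x from rfl, Finset.sum_mul]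
    exact Finset.sum_congr rfl fun ν _ => by ring
  have hC4 : ∀ a b : Option (Fin n),
      (∑ ν, ∑ ρ, Gmet N gm a ν x * (conn N B gm gminv ν ρ b x * sC B ρ lam mu x))
        = ∑ ρ, lconn N B gm gminv ρ b a x * sC B ρ lam mu x := by
    intro a b
    rw [Finset.sum_comm]
    refine Finset.sum_congr rfl fun ρ _ => ?_
    rw [show lconn N B gm gminv ρ b a x
        = ∑ ν, Gmet N gm a ν x * conn N B gm gminv ν ρ b x from rfl, Finset.sum_mul]
    exact Finset.sum_congr rfl fun ν _ => by ring
  -- structure-coefficient contraction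
  have hCc : (∑ ρ, lconn N B gm gminv ρ beta alpha x * sC B ρ lam mu x)
      + (∑ ρ, lconn N B gm gminv ρ alpha beta x * sC B ρ lam mu x)
      = ∑ ρ, sC B ρ lam mu x * pf B ρ (Gmet N gm beta alpha) x := by
    rw [← Finset.sum_add_distrib]
    exact Finset.sum_congr rfl fun ρ _ => by rw [hcompat ρ beta alpha x]; ring
  -- symmetry of the quadratic contraction
  have hSsym : ∀ a b c d : Option (Fin n),
      (∑ ν, lconn N B gm gminv a b ν x * conn N B gm gminv ν c d x)
        = ∑ ν, lconn N B gm gminv c d ν x * conn N B gm gminv ν a b x := by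
    intro a b c d
    simp only [lconn, Finset.sum_mul]
    rw [Finset.sum_comm]
    exact Finset.sum_congr rfl fun ν _ => Finset.sum_congr rfl fun σ _ => by
      rw [Gmet_symm hgsym]; ring
  -- assemble
  rw [expand alpha beta, expand beta alpha,
    hsplit lam alpha mu beta, hsplit lam beta mu alpha,
    hsplit mu alpha lam beta, hsplit mu beta lam alpha,
    hquad alpha beta lam mu, hquad beta alpha lam mu,
    hquad alpha beta mu lam, hquad beta alpha mu lam,
    hC4 alpha beta, hC4 beta alpha,
    hsum_compat lam alpha mu beta, hsum_compat lam beta mu alpha,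
    hsum_compat mu alpha lam beta, hsum_compat mu beta lam alpha]
  have h19 := hSsym lam alpha mu beta
  have h20 := hSsym lam beta mu alpha
  linarith [hpfsum lam mu, hpfsum mu lam, hcomm, hCc, h19, h20]

end Lowered

/-! #### Symmetry corollaries, extrinsic curvature, connection components -/

section Components
variable {N : SpTm n → ℝ} {B : Fin n → SpTm n → ℝ} {gm gminv : Fin n → Fin n → SpTm n → ℝ}

lemma RiemMix_antisymm_fst (lam mu α β : Option (Fin n)) (x : SpTm n) :
    RiemMix N B gm gminv lam mu α β x + RiemMix N B gm gminv mu lam α β x = 0 := by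
  simp only [RiemMix]
  have h1 : (∑ ρ, conn N B gm gminv α ρ β x * sC B ρ mu lam x)
      = -∑ ρ, conn N B gm gminv α ρ β x * sC B ρ lam mu x := by
    rw [← Finset.sum_neg_distrib]
    exact Finset.sum_congr rfl fun ρ _ => by rw [sC_antisymm]; ring
  have h2 : (∑ ρ, (conn N B gm gminv α mu ρ x * conn N B gm gminv ρ lam β x
        - conn N B gm gminv α lam ρ x * conn N B gm gminv ρ mu β x))
      = -∑ ρ, (conn N B gm gminv α lam ρ x * conn N B gm gminv ρ mu β x
        - conn N B gm gminv α mu ρ x * conn N B gm gminv ρ lam β x) := by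
    rw [← Finset.sum_neg_distrib]
    exact Finset.sum_congr rfl fun ρ _ => by ring
  rw [h1, h2]
  ring

lemma RiemMix_diag (lam α β : Option (Fin n)) (x : SpTm n) :
    RiemMix N B gm gminv lam lam α β x = 0 := by
  have := RiemMix_antisymm_fst (N := N) (B := B) (gm := gm) (gminv := gminv) lam lam α β x
  linarith

lemma Riem_antisymm_fst (lam mu α β : Option (Fin n)) (x : SpTm n) :
    Riem N B gm gminv lam mu α β x + Riem N B gm gminv mu lam α β x = 0 := by
  simp only [Riem]
  rw [← Finset.sum_add_distrib]
  refine Finset.sum_eq_zero fun ν _ => ?_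
  rw [← mul_add, RiemMix_antisymm_fst, mul_zero]

lemma hat0g_symm (hgsym : ∀ i j x, gm i j x = gm j i x) (i j : Fin n) (x : SpTm n) :
    hat0g B gm i j x = hat0g B gm j i x := by
  simp only [hat0g]
  have h1 : pf B none (gm i j) x = pf B none (gm j i) x :=
    pf_congr B none x fun y => hgsym i j y
  rw [h1]
  congr 1
  exact Finset.sum_congr rfl fun h _ => by rw [hgsym h j, hgsym i h]; ring

lemma Kdef_symm (hgsym : ∀ i j x, gm i j x = gm j i x) (i j : Fin n) (x : SpTm n) :
    Kdef N B gm i j x = Kdef N B gm j i x := by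
  simp only [Kdef, hat0g_symm (B := B) hgsym i j]

lemma hat0g_eq_K (hNpos : ∀ x, 0 < N x) (i j : Fin n) (x : SpTm n) :
    hat0g B gm i j x = -(2 * N x * Kdef N B gm i j x) := by
  have hne : N x ≠ 0 := (hNpos x).ne'
  rw [Kdef]
  field_simp

lemma pf_Gmet_s0 (α : Option (Fin n)) (j : Fin n) (x : SpTm n) :
    pf B α (Gmet N gm (some j) none) x = 0 := by
  rw [show Gmet N gm (some j) none = fun _ => (0:ℝ) from rfl, pf_const]

lemma pf_Gmet_0s (α : Option (Fin n)) (j : Fin n) (x : SpTm n) :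
    pf B α (Gmet N gm none (some j)) x = 0 := by
  rw [show Gmet N gm none (some j) = fun _ => (0:ℝ) from rfl, pf_const]

lemma Gmet_ss_fun (N : SpTm n → ℝ) (gm : Fin n → Fin n → SpTm n → ℝ) (i j : Fin n) :
    Gmet N gm (some i) (some j) = gm i j := rfl

lemma conn_0ij (i j : Fin n) (x : SpTm n) :
    conn N B gm gminv none (some i) (some j) x
      = (N x)⁻¹^2 * ((1/2) * hat0g B gm i j x) := by
  rw [conn, Chr, Fintype.sum_option, Fintype.sum_option]
  simp only [Gmetinv_00, Gmetinv_0s, Gmet_00, Gmet_0s, Gmet_s0, Gmet_ss]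
  rw [pf_Gmet_s0, pf_Gmet_s0]
  rw [tildeOm]
  simp only [Fintype.sum_option, sC_none', sC_s00, sC_s0j, sC_sj0, sC_sjj,
    Gmet_00, Gmet_0s, Gmet_s0, Gmet_ss, mul_zero, zero_mul, Finset.sum_const_zero,
    add_zero, zero_add, zero_sub, mul_neg, Finset.sum_neg_distrib, neg_neg, sub_neg_eq_add]
  rw [hat0g]
  rw [show Gmet N gm (some i) (some j) = gm i j from rfl, Finset.sum_add_distrib]
  ring

lemma conn_sij (m i j : Fin n) (x : SpTm n) :
    conn N B gm gminv (some m) (some i) (some j) x = sChr gm gminv m i j x := by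
  have ht : ∀ l : Fin n, tildeOm N B gm (some i) (some j) (some l) x = 0 := by
    intro l
    rw [tildeOm]
    simp [Fintype.sum_option]
  rw [conn, Chr, sChr]
  simp only [Fintype.sum_option, Gmetinv_s0, Gmetinv_ss, ht, mul_zero, Finset.sum_const_zero,
    add_zero, zero_mul, zero_add, Gmet_ss_fun]
  refine congrArg _ (Finset.sum_congr rfl fun l _ => ?_)
  rw [pf_some, pf_some, pf_some]

lemma conn_sj0 (hgsym : ∀ i j x, gm i j x = gm j i x) (h j : Fin n) (x : SpTm n) :
    conn N B gm gminv (some h) (some j) none x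
      = (1/2) * ∑ m, gminv h m x * hat0g B gm j m x := by
  have ht : ∀ m : Fin n, tildeOm N B gm (some j) none (some m) x
      = (1/2) * (-(∑ k, gm m k x * cD (some j) (B k) x)
          - ∑ k, gm j k x * cD (some m) (B k) x) := by
    intro m
    rw [tildeOm]
    simp [Fintype.sum_option, Finset.sum_neg_distrib]
  rw [conn, Chr]
  simp only [Fintype.sum_option, Gmetinv_s0, Gmetinv_ss, Gmet_0s, Gmet_s0, ht, Gmet_ss_fun,
    pf_Gmet_0s, pf_Gmet_s0, zero_mul, mul_zero, zero_add, add_zero, hat0g]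
  rw [Finset.mul_sum, Finset.mul_sum, ← Finset.sum_add_distrib]
  refine Finset.sum_congr rfl fun l _ => ?_
  have e1 : (∑ k, gm l k x * cD (some j) (B k) x) = ∑ k, gm k l x * cD (some j) (B k) x :=
    Finset.sum_congr rfl fun k _ => by rw [hgsym]
  have e2 : (∑ k, (gm k l x * cD (some j) (B k) x + gm j k x * cD (some l) (B k) x))
      = (∑ k, gm k l x * cD (some j) (B k) x) + ∑ k, gm j k x * cD (some l) (B k) x :=
    Finset.sum_add_distrib
  rw [e1, e2]
  ring

lemma conn_0ij_K (hNpos : ∀ x, 0 < N x) (i j : Fin n) (x : SpTm n) :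
    conn N B gm gminv none (some i) (some j) x = -((N x)⁻¹ * Kdef N B gm i j x) := by
  have hne : N x ≠ 0 := (hNpos x).ne'
  rw [conn_0ij, hat0g_eq_K hNpos]
  field_simp

lemma conn_sj0_K (hNpos : ∀ x, 0 < N x) (hgsym : ∀ i j x, gm i j x = gm j i x)
    (h j : Fin n) (x : SpTm n) :
    conn N B gm gminv (some h) (some j) none x
      = -(N x * ∑ m, gminv h m x * Kdef N B gm j m x) := by
  rw [conn_sj0 hgsym, Finset.mul_sum]
  rw [show -(N x * ∑ m, gminv h m x * Kdef N B gm j m x)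
      = ∑ m, -(N x * (gminv h m x * Kdef N B gm j m x)) by
    rw [Finset.mul_sum, ← Finset.sum_neg_distrib]]
  refine Finset.sum_congr rfl fun m _ => ?_
  rw [hat0g_eq_K hNpos]
  ring

lemma RiemMix_spatial (hNpos : ∀ x, 0 < N x) (hgsym : ∀ i j x, gm i j x = gm j i x)
    (k i m l : Fin n) (x : SpTm n) :
    RiemMix N B gm gminv (some k) (some i) (some m) (some l) x
      = sRiemMix gm gminv k i m l x
        + (∑ h, gminv m h x * Kdef N B gm k h x) * Kdef N B gm i l x
        - (∑ h, gminv m h x * Kdef N B gm i h x) * Kdef N B gm k l x := by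
  have hNe : N x ≠ 0 := (hNpos x).ne'
  have hfun : ∀ a b c : Fin n,
      conn N B gm gminv (some a) (some b) (some c) = sChr gm gminv a b c :=
    fun a b c => funext fun y => conn_sij a b c y
  have hpf1 : pf B (some k) (conn N B gm gminv (some m) (some i) (some l)) x
      = cD (some k) (sChr gm gminv m i l) x := by rw [hfun m i l]; rfl
  have hpf2 : pf B (some i) (conn N B gm gminv (some m) (some k) (some l)) x
      = cD (some i) (sChr gm gminv m k l) x := by rw [hfun m k l]; rfl
  rw [RiemMix, sRiemMix, hpf1, hpf2]
  simp only [Fintype.sum_option, sC_none', sC_sjj, mul_zero, Finset.sum_const_zero, add_zero,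
    sub_zero, conn_sij, conn_0ij_K (B := B) (gminv := gminv) hNpos,
    conn_sj0_K (gminv := gminv) hNpos hgsym]
  have hprod1 : -(N x * ∑ h, gminv m h x * Kdef N B gm k h x) * -((N x)⁻¹ * Kdef N B gm i l x)
      = (∑ h, gminv m h x * Kdef N B gm k h x) * Kdef N B gm i l x := by
    field_simp
  have hprod2 : -(N x * ∑ h, gminv m h x * Kdef N B gm i h x) * -((N x)⁻¹ * Kdef N B gm k l x)
      = (∑ h, gminv m h x * Kdef N B gm i h x) * Kdef N B gm k l x := by
    field_simp
  rw [hprod1, hprod2]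
  ring

lemma Riem_spatial (hNpos : ∀ x, 0 < N x) (hgsym : ∀ i j x, gm i j x = gm j i x)
    (hginv : ∀ i j x, (∑ k, gm i k x * gminv k j x) = if i = j then (1:ℝ) else 0)
    (k i l j : Fin n) (x : SpTm n) :
    Riem N B gm gminv (some k) (some i) (some l) (some j) x
      = sRiem gm gminv k i l j x
        + Kdef N B gm k l x * Kdef N B gm i j x
        - Kdef N B gm i l x * Kdef N B gm k j x := by
  have hlower : ∀ a : Fin n,
      (∑ m, gm l m x * ∑ h, gminv m h x * Kdef N B gm a h x) = Kdef N B gm a l x := by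
    intro a
    calc (∑ m, gm l m x * ∑ h, gminv m h x * Kdef N B gm a h x)
        = ∑ m, ∑ h, gm l m x * gminv m h x * Kdef N B gm a h x := by
          refine Finset.sum_congr rfl fun m _ => ?_
          rw [Finset.mul_sum]
          exact Finset.sum_congr rfl fun h _ => by ring
      _ = ∑ h, ∑ m, gm l m x * gminv m h x * Kdef N B gm a h x := Finset.sum_comm
      _ = ∑ h, (∑ m, gm l m x * gminv m h x) * Kdef N B gm a h x := by
          exact Finset.sum_congr rfl fun h _ => (Finset.sum_mul _ _ _).symm
      _ = ∑ h, (if l = h then (1:ℝ) else 0) * Kdef N B gm a h x := by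
          exact Finset.sum_congr rfl fun h _ => by rw [hginv l h x]
      _ = Kdef N B gm a l x := by simp
  rw [Riem, sRiem]
  simp only [Fintype.sum_option, Gmet_s0, zero_mul, zero_add, Gmet_ss,
    RiemMix_spatial hNpos hgsym]
  rw [show (∑ m, gm l m x * (sRiemMix gm gminv k i m j x
        + (∑ h, gminv m h x * Kdef N B gm k h x) * Kdef N B gm i j x
        - (∑ h, gminv m h x * Kdef N B gm i h x) * Kdef N B gm k j x))
      = (∑ m, gm l m x * sRiemMix gm gminv k i m j x)
        + (∑ m, gm l m x * ∑ h, gminv m h x * Kdef N B gm k h x) * Kdef N B gm i j x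
        - (∑ m, gm l m x * ∑ h, gminv m h x * Kdef N B gm i h x) * Kdef N B gm k j x by
    rw [Finset.sum_mul, Finset.sum_mul, ← Finset.sum_add_distrib, ← Finset.sum_sub_distrib]
    exact Finset.sum_congr rfl fun m _ => by ring]
  rw [hlower k, hlower i]

end Components

end Aux

/-- Hamiltonian constraint identity: in a Cauchy adapted frame,
`2N^{−2}S_{00} = R̄ − K_{ij}K^{ij} + (K^h_h)²`. -/
theorem hamiltonian_constraint_identity
    (N : SpTm n → ℝ) (B : Fin n → SpTm n → ℝ)
    (gm gminv : Fin n → Fin n → SpTm n → ℝ)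
    (hN : ContDiff ℝ (⊤ : ℕ∞) N) (hNpos : ∀ x, 0 < N x)
    (hB : ∀ i, ContDiff ℝ (⊤ : ℕ∞) (B i))
    (hgm : ∀ i j, ContDiff ℝ (⊤ : ℕ∞) (gm i j)) (hgminv : ∀ i j, ContDiff ℝ (⊤ : ℕ∞) (gminv i j))
    (hgsym : ∀ i j x, gm i j x = gm j i x)
    (hgpos : ∀ x, Matrix.PosDef (Matrix.of fun i j => gm i j x))
    (hginv : ∀ i j x, (∑ k, gm i k x * gminv k j x) = if i = j then (1:ℝ) else 0) :
    ∀ x : SpTm n,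
      2 * ((N x)⁻¹)^2 * S00 N B gm gminv x
        = sScal gm gminv x
          - (∑ i, ∑ j, ∑ k, ∑ l,
              gminv i k x * gminv j l x * Kdef N B gm i j x * Kdef N B gm k l x)
          + (∑ i, ∑ j, gminv i j x * Kdef N B gm i j x)^2 := by
  intro x
  have hNe : N x ≠ 0 := (hNpos x).ne'
  have hRic : ∀ α β : Option (Fin n), RicG N B gm gminv α β x
      = -(N x)⁻¹^2 * Riem N B gm gminv none α none β x
        + ∑ k, ∑ l, gminv k l x * Riem N B gm gminv (some k) α (some l) β x := by
    intro α β
    rw [RicG]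
    simp only [Fintype.sum_option, Gmetinv_00, Gmetinv_0s, Gmetinv_s0, Gmetinv_ss, zero_mul,
      Finset.sum_const_zero, add_zero, zero_add, neg_mul]
  have hScal : ScalG N B gm gminv x
      = -(N x)⁻¹^2 * RicG N B gm gminv none none x
        + ∑ i, ∑ j, gminv i j x * RicG N B gm gminv (some i) (some j) x := by
    rw [ScalG]
    simp only [Fintype.sum_option, Gmetinv_00, Gmetinv_0s, Gmetinv_s0, Gmetinv_ss, zero_mul,
      Finset.sum_const_zero, add_zero, zero_add, neg_mul]
  have h0000 : Riem N B gm gminv none none none none x = 0 := by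
    rw [Riem]
    exact Finset.sum_eq_zero fun ν _ => by rw [RiemMix_diag, mul_zero]
  have hswap : ∀ k l : Fin n, Riem N B gm gminv (some k) none (some l) none x
      = Riem N B gm gminv none (some k) none (some l) x := by
    intro k l
    have h1 := Riem_antisymm_fst (N := N) (B := B) (gm := gm) (gminv := gminv)
      (some k) none (some l) none x
    have h2 := Riem_antisymm_last hN hNpos hB hgm hgminv hgsym hginv
      none (some k) (some l) none x
    linarith
  have hR00 : RicG N B gm gminv none none x
      = ∑ k, ∑ l, gminv k l x * Riem N B gm gminv none (some k) none (some l) x := by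
    rw [hRic none none, h0000, mul_zero, zero_add]
    exact Finset.sum_congr rfl fun k _ => Finset.sum_congr rfl fun l _ => by rw [hswap k l]
  have hRicS : (∑ i, ∑ j, gminv i j x * RicG N B gm gminv (some i) (some j) x)
      = -((N x)⁻¹^2 * (∑ k, ∑ l, gminv k l x *
            Riem N B gm gminv none (some k) none (some l) x))
        + ∑ i, ∑ j, gminv i j x *
            (∑ k, ∑ l, gminv k l x *
              Riem N B gm gminv (some k) (some i) (some l) (some j) x) := by
    calc (∑ i, ∑ j, gminv i j x * RicG N B gm gminv (some i) (some j) x)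
        = ∑ i, ∑ j, (-((N x)⁻¹^2 *
              (gminv i j x * Riem N B gm gminv none (some i) none (some j) x))
            + gminv i j x * (∑ k, ∑ l, gminv k l x *
                Riem N B gm gminv (some k) (some i) (some l) (some j) x)) := by
          refine Finset.sum_congr rfl fun i _ => Finset.sum_congr rfl fun j _ => ?_
          rw [hRic (some i) (some j)]
          ring
      _ = (∑ i, ∑ j, -((N x)⁻¹^2 *
              (gminv i j x * Riem N B gm gminv none (some i) none (some j) x)))
          + ∑ i, ∑ j, gminv i j x * (∑ k, ∑ l, gminv k l x *
                Riem N B gm gminv (some k) (some i) (some l) (some j) x) := by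
          simp only [Finset.sum_add_distrib]
      _ = -((N x)⁻¹^2 * (∑ k, ∑ l, gminv k l x *
              Riem N B gm gminv none (some k) none (some l) x))
          + ∑ i, ∑ j, gminv i j x * (∑ k, ∑ l, gminv k l x *
                Riem N B gm gminv (some k) (some i) (some l) (some j) x) := by
          congr 1
          simp only [Finset.mul_sum, Finset.sum_neg_distrib]
  have hA : 2 * ((N x)⁻¹)^2 * S00 N B gm gminv x
      = ∑ i, ∑ j, gminv i j x *
          (∑ k, ∑ l, gminv k l x *
            Riem N B gm gminv (some k) (some i) (some l) (some j) x) := by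
    rw [S00, Gmet_00, hScal, hRicS, hR00]
    set T0 := ∑ k, ∑ l, gminv k l x * Riem N B gm gminv none (some k) none (some l) x with hT0
    set T2 := ∑ i, ∑ j, gminv i j x *
        (∑ k, ∑ l, gminv k l x *
          Riem N B gm gminv (some k) (some i) (some l) (some j) x) with hT2
    field_simp
    ring
  have hinner : ∀ i j : Fin n,
      (∑ k, ∑ l, gminv k l x * Riem N B gm gminv (some k) (some i) (some l) (some j) x)
        = sRic gm gminv i j x
          + (∑ k, ∑ l, gminv k l x * (Kdef N B gm k l x * Kdef N B gm i j x))
          - (∑ k, ∑ l, gminv k l x * (Kdef N B gm i l x * Kdef N B gm k j x)) := by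
    intro i j
    rw [sRic]
    calc (∑ k, ∑ l, gminv k l x * Riem N B gm gminv (some k) (some i) (some l) (some j) x)
        = ∑ k, ∑ l, (gminv k l x * sRiem gm gminv k i l j x
            + gminv k l x * (Kdef N B gm k l x * Kdef N B gm i j x)
            - gminv k l x * (Kdef N B gm i l x * Kdef N B gm k j x)) := by
          refine Finset.sum_congr rfl fun k _ => Finset.sum_congr rfl fun l _ => ?_
          rw [Riem_spatial hNpos hgsym hginv]
          ring
      _ = _ := by simp only [Finset.sum_add_distrib, Finset.sum_sub_distrib]
  have htr : (∑ i, ∑ j, gminv i j x *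
        (∑ k, ∑ l, gminv k l x * (Kdef N B gm k l x * Kdef N B gm i j x)))
      = (∑ i, ∑ j, gminv i j x * Kdef N B gm i j x)^2 := by
    have h1 : ∀ i j : Fin n,
        (∑ k, ∑ l, gminv k l x * (Kdef N B gm k l x * Kdef N B gm i j x))
          = (∑ k, ∑ l, gminv k l x * Kdef N B gm k l x) * Kdef N B gm i j x := by
      intro i j
      rw [Finset.sum_mul]
      refine Finset.sum_congr rfl fun k _ => ?_
      rw [Finset.sum_mul]
      exact Finset.sum_congr rfl fun l _ => by ring
    calc (∑ i, ∑ j, gminv i j x *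
          (∑ k, ∑ l, gminv k l x * (Kdef N B gm k l x * Kdef N B gm i j x)))
        = ∑ i, ∑ j, gminv i j x *
            ((∑ k, ∑ l, gminv k l x * Kdef N B gm k l x) * Kdef N B gm i j x) := by
          exact Finset.sum_congr rfl fun i _ => Finset.sum_congr rfl fun j _ => by rw [h1]
      _ = (∑ k, ∑ l, gminv k l x * Kdef N B gm k l x)
            * ∑ i, ∑ j, gminv i j x * Kdef N B gm i j x := by
          rw [Finset.mul_sum]
          refine Finset.sum_congr rfl fun i _ => ?_
          rw [Finset.mul_sum]
          exact Finset.sum_congr rfl fun j _ => by ring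
      _ = (∑ i, ∑ j, gminv i j x * Kdef N B gm i j x)^2 := by rw [pow_two]
  have hquart : (∑ i, ∑ j, gminv i j x *
        (∑ k, ∑ l, gminv k l x * (Kdef N B gm i l x * Kdef N B gm k j x)))
      = ∑ i, ∑ j, ∑ k, ∑ l,
          gminv i k x * gminv j l x * Kdef N B gm i j x * Kdef N B gm k l x := by
    have h1 : (∑ i, ∑ j, gminv i j x *
          (∑ k, ∑ l, gminv k l x * (Kdef N B gm i l x * Kdef N B gm k j x)))
        = ∑ a, ∑ b, ∑ c, ∑ d,
            gminv a b x * gminv c d x * Kdef N B gm a d x * Kdef N B gm c b x := by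
      refine Finset.sum_congr rfl fun a _ => Finset.sum_congr rfl fun b _ => ?_
      rw [Finset.mul_sum]
      refine Finset.sum_congr rfl fun c _ => ?_
      rw [Finset.mul_sum]
      exact Finset.sum_congr rfl fun d _ => by ring
    have h2 : ∀ a : Fin n,
        (∑ b, ∑ c, ∑ d, gminv a b x * gminv c d x * Kdef N B gm a d x * Kdef N B gm c b x)
          = ∑ d, ∑ b, ∑ c,
              gminv a b x * gminv c d x * Kdef N B gm a d x * Kdef N B gm c b x := by
      intro a
      rw [show (∑ b, ∑ c, ∑ d, gminv a b x * gminv c d x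
            * Kdef N B gm a d x * Kdef N B gm c b x)
          = ∑ b, ∑ d, ∑ c, gminv a b x * gminv c d x
            * Kdef N B gm a d x * Kdef N B gm c b x from
        Finset.sum_congr rfl fun b _ => Finset.sum_comm]
      exact Finset.sum_comm
    rw [h1]
    rw [Finset.sum_congr rfl fun a _ => h2 a]
    refine Finset.sum_congr rfl fun a _ => Finset.sum_congr rfl fun d _ =>
      Finset.sum_congr rfl fun b _ => Finset.sum_congr rfl fun c _ => ?_
    rw [gminv_symm hgsym hginv c d, Kdef_symm hgsym c b]
  rw [hA]
  calc (∑ i, ∑ j, gminv i j x *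
        (∑ k, ∑ l, gminv k l x *
          Riem N B gm gminv (some k) (some i) (some l) (some j) x))
      = ∑ i, ∑ j, (gminv i j x * sRic gm gminv i j x
          + gminv i j x * (∑ k, ∑ l, gminv k l x * (Kdef N B gm k l x * Kdef N B gm i j x))
          - gminv i j x * (∑ k, ∑ l, gminv k l x * (Kdef N B gm i l x * Kdef N B gm k j x))) := by
        refine Finset.sum_congr rfl fun i _ => Finset.sum_congr rfl fun j _ => ?_
        rw [hinner i j]
        ring
    _ = (∑ i, ∑ j, gminv i j x * sRic gm gminv i j x)
        + (∑ i, ∑ j, gminv i j x *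
            (∑ k, ∑ l, gminv k l x * (Kdef N B gm k l x * Kdef N B gm i j x)))
        - ∑ i, ∑ j, gminv i j x *
            (∑ k, ∑ l, gminv k l x * (Kdef N B gm i l x * Kdef N B gm k j x)) := by
        simp only [Finset.sum_add_distrib, Finset.sum_sub_distrib]
    _ = sScal gm gminv x
          - (∑ i, ∑ j, ∑ k, ∑ l,
              gminv i k x * gminv j l x * Kdef N B gm i j x * Kdef N B gm k l x)
          + (∑ i, ∑ j, gminv i j x * Kdef N B gm i j x)^2 := by
        rw [htr, hquart, sScal]
        ring

end
end

section
/- The 6×6 characteristic matrix of the Bianchi evolution equations for one block, namely M(ξ) with first 3×3 diagonal blocks ξ_0·I, off-diagonal blocks the antisymmetric matrices N·(curl symbol) as displayed (rows: (0,0,0,ξ_2,−ξ_1,0; 0,0,0,0,ξ_3,−ξ_2; 0,0,0,−ξ_3,0,ξ_1) times N and its transpose), is symmetric and its determinant equals −N^6 (ξ_0 ξ^0)(ξ_α ξ^α)², where ξ^0 = −N^{−2}ξ_0 and ξ_αξ^α = −N^{−2}ξ_0² + ξ_1² + ξ_2² + ξ_3². -/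
/-!
With `K` the matrix of the cross product with `N ξ⃗`, the symbol is the block matrix
`[[ξ₀ I, K], [Kᵀ, ξ₀ I]]`, visibly symmetric. Its lower right block is scalar, hence commutes
with `Kᵀ`, so `det M = det (ξ₀² I - K Kᵀ)`; and `K Kᵀ = |N ξ⃗|² I - (N ξ⃗)(N ξ⃗)ᵀ`.
The matrix `(ξ₀² - N² |ξ⃗|²) I + (N ξ⃗)(N ξ⃗)ᵀ` has the eigenvalue `ξ₀²` along `ξ⃗` and
`ξ₀² - N² |ξ⃗|²` twice on its orthogonal complement.
-/

open Matrix

/-- The 6×6 characteristic matrix of one block of the Bianchi evolution equations. -/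
def bianchiSymbol (N : ℝ) (ξ : Fin 4 → ℝ) : Matrix (Fin 6) (Fin 6) ℝ :=
  !![ξ 0,   0,     0,     0,        N * ξ 3,  -(N * ξ 2);
     0,     ξ 0,   0,     -(N * ξ 3), 0,      N * ξ 1;
     0,     0,     ξ 0,   N * ξ 2,  -(N * ξ 1), 0;
     0,     -(N * ξ 3), N * ξ 2, ξ 0, 0,      0;
     N * ξ 3, 0,   -(N * ξ 1), 0,    ξ 0,    0;
     -(N * ξ 2), N * ξ 1, 0,    0,    0,      ξ 0]

namespace Matrix

variable {𝕜 : Type*} [NontriviallyNormedField 𝕜] {n : Type*} [Fintype n] [DecidableEq n]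

theorem det_fromBlocks_smul_one_of_ne_zero {a : 𝕜} (ha : a ≠ 0) (A B C : Matrix n n 𝕜) :
    (fromBlocks A B C (a • 1)).det = (a • A - B * C).det := by
  let _ : Invertible (a • 1 : Matrix n n 𝕜) :=
    ⟨a⁻¹ • 1, by simp [smul_smul, ha], by simp [smul_smul, ha]⟩
  rw [det_fromBlocks₂₂, show ⅟(a • 1 : Matrix n n 𝕜) = a⁻¹ • 1 from rfl, det_smul, det_one,
    mul_one, ← det_smul, mul_smul_comm, Matrix.mul_one, smul_sub, Matrix.smul_mul, smul_smul,
    mul_inv_cancel₀ ha, one_smul]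

/-- The case `a = 0` follows from `a ≠ 0` by continuity in `a`. -/
theorem det_fromBlocks_smul_one (a : 𝕜) (A B C : Matrix n n 𝕜) :
    (fromBlocks A B C (a • 1)).det = (a • A - B * C).det :=
  congrFun (Continuous.ext_on (dense_compl_singleton 0)
    (f := fun a : 𝕜 => (fromBlocks A B C (a • 1)).det) (g := fun a => (a • A - B * C).det)
    (by fun_prop) (by fun_prop) fun a ha => det_fromBlocks_smul_one_of_ne_zero ha A B C) a

end Matrix

section CrossMatrix

variable {R : Type*} [CommRing R]

/-- The matrix of `w ↦ w ⨯₃ v`. -/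
def crossMatrix (v : Fin 3 → R) : Matrix (Fin 3) (Fin 3) R :=
  !![0, v 2, -v 1; -v 2, 0, v 0; v 1, -v 0, 0]

theorem crossMatrix_mul_transpose (v : Fin 3 → R) :
    crossMatrix v * (crossMatrix v)ᵀ = (v ⬝ᵥ v) • 1 - vecMulVec v v := by
  ext i j
  fin_cases i <;> fin_cases j <;>
    simp [crossMatrix, vecMulVec, dotProduct, Fin.sum_univ_three, mul_apply] <;> ring

theorem det_smul_one_add_vecMulVec (c : R) (u v : Fin 3 → R) :
    (c • 1 + vecMulVec u v).det = c ^ 2 * (c + v ⬝ᵥ u) := by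
  simp only [vecMulVec, det_fin_three, Matrix.add_apply, Matrix.smul_apply, one_apply_eq,
    smul_eq_mul, mul_one, of_apply, ne_eq, Fin.reduceEq, not_false_eq_true, one_apply_ne, mul_zero,
    zero_add, dotProduct, Fin.sum_univ_three]
  ring

end CrossMatrix

theorem bianchiSymbol_eq_submatrix_fromBlocks (N : ℝ) (ξ : Fin 4 → ℝ) :
    bianchiSymbol N ξ =
      (fromBlocks (ξ 0 • 1) (crossMatrix (N • Fin.tail ξ)) (crossMatrix (N • Fin.tail ξ))ᵀ
        (ξ 0 • 1)).submatrix finSumFinEquiv.symm finSumFinEquiv.symm := by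
  ext i j
  fin_cases i <;> fin_cases j <;>
    simp [bianchiSymbol, crossMatrix, Fin.tail, finSumFinEquiv, Fin.addCases]

theorem det_bianchiSymbol (N : ℝ) (ξ : Fin 4 → ℝ) :
    (bianchiSymbol N ξ).det
      = ξ 0 ^ 2 * (ξ 0 ^ 2 - N ^ 2 * (ξ 1 ^ 2 + ξ 2 ^ 2 + ξ 3 ^ 2)) ^ 2 := by
  set w := N • Fin.tail ξ
  have hw : w ⬝ᵥ w = N ^ 2 * (ξ 1 ^ 2 + ξ 2 ^ 2 + ξ 3 ^ 2) := by
    simp only [w, dotProduct, Pi.smul_apply, Fin.tail, smul_eq_mul, Fin.sum_univ_three,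
      Fin.succ_zero_eq_one, Fin.succ_one_eq_two, Fin.reduceSucc]
    ring
  rw [bianchiSymbol_eq_submatrix_fromBlocks, det_submatrix_equiv_self, det_fromBlocks_smul_one,
    crossMatrix_mul_transpose, smul_smul, sub_sub_eq_add_sub, add_sub_right_comm, ← sub_smul,
    det_smul_one_add_vecMulVec, hw]
  ring

/-- the characteristic matrix of the Bianchi evolution equations is symmetric
and its determinant equals `−N^6 (ξ_0 ξ^0)(ξ_α ξ^α)²` with `ξ^0 = −N^{−2}ξ_0` and
`ξ_αξ^α = −N^{−2}ξ_0² + ξ_1² + ξ_2² + ξ_3²`. -/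
theorem bianchi_symbol_symm_and_det (N : ℝ) (hN : 0 < N) (ξ : Fin 4 → ℝ) :
    (bianchiSymbol N ξ).IsSymm ∧
    (bianchiSymbol N ξ).det
      = -N^6 * (ξ 0 * (-(N⁻¹^2) * ξ 0))
          * (-(N⁻¹^2) * (ξ 0)^2 + (ξ 1)^2 + (ξ 2)^2 + (ξ 3)^2)^2 := by
  refine ⟨?_, ?_⟩
  · rw [bianchiSymbol_eq_submatrix_fromBlocks]
    exact (isSymm_one.smul _ |>.fromBlocks rfl (isSymm_one.smul _)).submatrix _
  · rw [det_bianchiSymbol]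
    field_simp [hN.ne']
    ring
end
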